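/- Let a finite group G act on ℂ^N by diagonal unitary matrices, and let V be an invertible N×N integer matrix such that z ↦ z^V is G-invariant and separates orbits of vectors with all entries nonzero. Let c = V^{-1}(1,…,1)ᵀ ∈ ℚ^N and suppose c_k ≥ 0 for all 1 ≤ k ≤ N. Define g(x) = ‖x‖ · (x/‖x‖)^V for x ≠ 0. If x, y ∈ ℂ^N have all entries nonzero and g(x) = g(y), then x ~ y. -/

import Mathlib

/-- The Laurent monomial map `z ↦ z^V` defined by an integer matrix `V`:
the `k`-th component is `∏_j z_j^{V k j}` (integer powers). -/
noncomputable def monV {N : ℕ} (V : Matrix (Fin N) (Fin N) ℤ) (z : Fin N → ℂ) :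
    Fin N → ℂ :=
  fun k => ∏ j, z j ^ V k j

/-- The vector `c = V⁻¹ (1,…,1)ᵀ ∈ ℚ^N`. -/
noncomputable def cvec {N : ℕ} (V : Matrix (Fin N) (Fin N) ℤ) : Fin N → ℚ :=
  (V.map (Int.cast : ℤ → ℚ))⁻¹.mulVec (fun _ => 1)

/-- The map `g(x) = ‖x‖ (x/‖x‖)^V` (with the Euclidean norm of `x`). -/
noncomputable def gmap {N : ℕ} (V : Matrix (Fin N) (Fin N) ℤ)
    (x : EuclideanSpace ℂ (Fin N)) : Fin N → ℂ :=
  fun k => ((‖x‖ : ℝ) : ℂ) * monV V (fun j => x j / ((‖x‖ : ℝ) : ℂ)) k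


/-!
Taking moduli and logarithms in `g(x) = g(y)` linearises it: with `a = |x|/‖x‖` and
`b = |y|/‖y‖` one gets `V (log a - log b) = (log ‖y‖ - log ‖x‖) • 1`, hence
`log a - log b = t • c` with `t = log ‖y‖ - log ‖x‖`. As `c ≥ 0` and `c ≠ 0`, a nonzero `t` would
make one of the unit vectors `a`, `b` dominate the other entrywise, which is impossible. So
`‖x‖ = ‖y‖`, and then `g(x) = g(y)` says `(x/‖x‖)^V = (y/‖x‖)^V`, to which separation applies.
-/

open Matrix Real

theorem Matrix.eq_smul_of_mulVec_eq_const {n R : Type*} [Fintype n] [DecidableEq n] [CommRing R]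
    [NoZeroDivisors R] {M : Matrix n n R} (hM : M.det ≠ 0) {c d : n → R} {t : R}
    (hc : M *ᵥ c = fun _ => 1) (hd : M *ᵥ d = fun _ => t) : d = t • c :=
  mulVec_injective_of_det_ne_zero hM <| by
    rw [hd, mulVec_smul, hc]
    funext
    simp

theorem Matrix.det_map_intCast_ne_zero {n R : Type*} [Fintype n] [DecidableEq n] [CommRing R]
    [CharZero R] {V : Matrix n n ℤ} (hV : V.det ≠ 0) : (V.map (Int.cast : ℤ → R)).det ≠ 0 := by
  rw [← Int.cast_det]
  exact_mod_cast hV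

theorem mulVec_cvec {N : ℕ} {V : Matrix (Fin N) (Fin N) ℤ} (hV : V.det ≠ 0) :
    V.map (Int.cast : ℤ → ℝ) *ᵥ (fun j => (cvec V j : ℝ)) = fun _ => 1 := by
  have hq : V.map (Int.cast : ℤ → ℚ) *ᵥ cvec V = fun _ => 1 := by
    rw [cvec, mulVec_mulVec, mul_nonsing_inv _ (det_map_intCast_ne_zero hV).isUnit, one_mulVec]
  funext i
  have := RingHom.map_mulVec (Rat.castHom ℝ) (V.map (Int.cast : ℤ → ℚ)) (cvec V) i
  rw [hq, Matrix.map_map] at this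
  simpa [Function.comp_def] using this.symm

theorem EuclideanSpace.sum_sq_norm_div_norm {𝕜 ι : Type*} [RCLike 𝕜] [Fintype ι]
    {x : EuclideanSpace 𝕜 ι} (hx : x ≠ 0) : ∑ j, (‖x j‖ / ‖x‖) ^ 2 = 1 := by
  have hx' : ‖x‖ ≠ 0 := norm_ne_zero_iff.mpr hx
  simp only [div_pow, ← Finset.sum_div, ← EuclideanSpace.norm_sq_eq]
  exact div_self (pow_ne_zero 2 hx')

theorem EuclideanSpace.ne_zero_of_forall_ne_zero {𝕜 ι : Type*} [RCLike 𝕜] [Nonempty ι]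
    {x : EuclideanSpace 𝕜 ι} (hx : ∀ j, x j ≠ 0) : x ≠ 0 := by
  obtain ⟨j⟩ := ‹Nonempty ι›
  rintro rfl
  exact hx j rfl

theorem eq_zero_of_log_sub_log_eq_mul {ι : Type*} [Fintype ι] {a b c : ι → ℝ} {t : ℝ}
    (ha : ∀ j, 0 < a j) (hb : ∀ j, 0 < b j) (hsum : ∑ j, a j ^ 2 = ∑ j, b j ^ 2)
    (hc : ∀ j, 0 ≤ c j) (hc0 : c ≠ 0) (h : ∀ j, log (a j) - log (b j) = t * c j) : t = 0 := by
  wlog ht : 0 ≤ t generalizing a b t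
  · have := this hb ha hsum.symm (t := -t) (fun j => by linarith [h j]) (by linarith)
    linarith
  have hle : ∀ j ∈ Finset.univ, b j ^ 2 ≤ a j ^ 2 := fun j _ => by
    have : log (b j) ≤ log (a j) := by nlinarith [h j, hc j]
    exact pow_le_pow_left₀ (hb j).le ((log_le_log_iff (hb j) (ha j)).mp this) 2
  have heq := (Finset.sum_eq_sum_iff_of_le hle).mp hsum.symm
  obtain ⟨j, hj⟩ := Function.ne_iff.mp hc0
  have hab : a j = b j := (pow_left_inj₀ (ha j).le (hb j).le two_ne_zero).mp
    (heq j (Finset.mem_univ j)).symm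
  have := h j
  rw [hab, sub_self] at this
  exact (mul_eq_zero.mp this.symm).resolve_right hj

theorem norm_gmap {N : ℕ} (V : Matrix (Fin N) (Fin N) ℤ) (x : EuclideanSpace ℂ (Fin N))
    (k : Fin N) : ‖gmap V x k‖ = ‖x‖ * ∏ j, (‖x j‖ / ‖x‖) ^ V k j := by
  simp [gmap, monV, norm_prod, norm_zpow]

theorem log_norm_gmap {N : ℕ} (V : Matrix (Fin N) (Fin N) ℤ) {x : EuclideanSpace ℂ (Fin N)}
    (hx : ∀ j, x j ≠ 0) (k : Fin N) :
    log ‖gmap V x k‖ = log ‖x‖ + (V.map (Int.cast : ℤ → ℝ) *ᵥ fun j => log (‖x j‖ / ‖x‖)) k := by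
  have : Nonempty (Fin N) := ⟨k⟩
  have hx0 : ‖x‖ ≠ 0 := norm_ne_zero_iff.mpr (EuclideanSpace.ne_zero_of_forall_ne_zero hx)
  have hpos : ∀ j, ‖x j‖ / ‖x‖ ≠ 0 := fun j => div_ne_zero (norm_ne_zero_iff.mpr (hx j)) hx0
  rw [norm_gmap, log_mul hx0 (Finset.prod_ne_zero_iff.mpr fun j _ => zpow_ne_zero _ (hpos j)),
    log_prod fun j _ => zpow_ne_zero _ (hpos j)]
  simp [log_zpow, mulVec, dotProduct]

theorem norm_eq_of_gmap_eq {N : ℕ} [Nonempty (Fin N)] {V : Matrix (Fin N) (Fin N) ℤ}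
    (hV : V.det ≠ 0) (hc : ∀ k, 0 ≤ cvec V k) {x y : EuclideanSpace ℂ (Fin N)}
    (hx : ∀ k, x k ≠ 0) (hy : ∀ k, y k ≠ 0) (hg : gmap V x = gmap V y) : ‖x‖ = ‖y‖ := by
  have hx0 := EuclideanSpace.ne_zero_of_forall_ne_zero hx
  have hy0 := EuclideanSpace.ne_zero_of_forall_ne_zero hy
  set c : Fin N → ℝ := fun j => (cvec V j : ℝ)
  have hVc : V.map (Int.cast : ℤ → ℝ) *ᵥ c = fun _ => 1 := mulVec_cvec hV
  have hc0 : c ≠ 0 := by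
    rintro hc0
    rw [hc0, mulVec_zero] at hVc
    exact zero_ne_one (congrFun hVc (Classical.arbitrary _))
  have hlog : V.map (Int.cast : ℤ → ℝ) *ᵥ
      ((fun j => log (‖x j‖ / ‖x‖)) - fun j => log (‖y j‖ / ‖y‖)) =
        fun _ => log ‖y‖ - log ‖x‖ := by
    funext k
    have := log_norm_gmap V hx k
    rw [hg, log_norm_gmap V hy k] at this
    rw [mulVec_sub, Pi.sub_apply]
    linarith
  have ht := eq_zero_of_log_sub_log_eq_mul (a := fun j => ‖x j‖ / ‖x‖) (b := fun j => ‖y j‖ / ‖y‖)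
    (fun j => div_pos (norm_pos_iff.mpr (hx j)) (norm_pos_iff.mpr hx0))
    (fun j => div_pos (norm_pos_iff.mpr (hy j)) (norm_pos_iff.mpr hy0))
    ((EuclideanSpace.sum_sq_norm_div_norm hx0).trans
      (EuclideanSpace.sum_sq_norm_div_norm hy0).symm)
    (fun j => Rat.cast_nonneg.mpr (hc j)) hc0
    (fun j => congrFun (eq_smul_of_mulVec_eq_const (det_map_intCast_ne_zero hV) hVc hlog) j)
  exact log_injOn_pos (norm_pos_iff.mpr hx0) (norm_pos_iff.mpr hy0) (by linarith)

theorem stmt13_general (N : ℕ) (G : Type)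
    (u : G → Fin N → ℂ)
    (V : Matrix (Fin N) (Fin N) ℤ) (hV : V.det ≠ 0)
    (hsep : ∀ z w : Fin N → ℂ, (∀ k, z k ≠ 0) → (∀ k, w k ≠ 0) →
      monV V z = monV V w → ∃ g, z = fun k => u g k * w k)
    (hc : ∀ k, 0 ≤ cvec V k)
    (x y : EuclideanSpace ℂ (Fin N)) (hx : ∀ k, x k ≠ 0) (hy : ∀ k, y k ≠ 0)
    (hg : gmap V x = gmap V y) :
    ∃ g, ∀ k, x k = u g k * y k := by
  rcases isEmpty_or_nonempty (Fin N) with hN | hN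
  · -- `hsep` is the only source of an element of `G`
    obtain ⟨g, -⟩ := hsep _ _ hx hx rfl
    exact ⟨g, isEmptyElim⟩
  have hr : ((‖x‖ : ℝ) : ℂ) ≠ 0 :=
    Complex.ofReal_ne_zero.mpr (norm_ne_zero_iff.mpr (EuclideanSpace.ne_zero_of_forall_ne_zero hx))
  have hmon : monV V (fun k => x k / ‖x‖) = monV V (fun k => y k / ‖x‖) := by
    funext k
    have := congrFun hg k
    rw [gmap, gmap, ← norm_eq_of_gmap_eq hV hc hx hy hg] at this
    exact mul_left_cancel₀ hr this
  obtain ⟨g, hxy⟩ := hsep _ _ (fun k => div_ne_zero (hx k) hr) (fun k => div_ne_zero (hy k) hr) hmon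
  refine ⟨g, fun k => ?_⟩
  have := congrFun hxy k
  rwa [← mul_div_assoc, div_left_inj' hr] at this

/-- let a finite group `G` act on `ℂ^N` by diagonal unitary matrices, and
let `V` be an invertible integer matrix such that `z ↦ z^V` is `G`-invariant and
separates orbits of vectors with all entries nonzero.  Suppose every entry of
`c = V⁻¹(1,…,1)ᵀ` is nonnegative.  If `x, y` have all entries nonzero and
`g(x) = g(y)`, then `x ∼ y`. -/
theorem stmt13 (N : ℕ) (G : Type) [Group G] [Fintype G]
    (u : G → Fin N → ℂ)
    (huabs : ∀ g k, ‖u g k‖ = 1)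
    (huone : ∀ k, u 1 k = 1)
    (humul : ∀ g h k, u (g * h) k = u g k * u h k)
    (V : Matrix (Fin N) (Fin N) ℤ) (hV : V.det ≠ 0)
    (hGinv : ∀ g (z : Fin N → ℂ), (∀ k, z k ≠ 0) →
      monV V (fun k => u g k * z k) = monV V z)
    (hsep : ∀ z w : Fin N → ℂ, (∀ k, z k ≠ 0) → (∀ k, w k ≠ 0) →
      monV V z = monV V w → ∃ g, z = fun k => u g k * w k)
    (hc : ∀ k, 0 ≤ cvec V k)
    (x y : EuclideanSpace ℂ (Fin N)) (hx : ∀ k, x k ≠ 0) (hy : ∀ k, y k ≠ 0)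
    (hg : gmap V x = gmap V y) :
    ∃ g, ∀ k, x k = u g k * y k :=
  stmt13_general N G u V hV hsep hc x y hx hy hg
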